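/- arXiv:1712.06970 — 7 statements merged into one kernel-verified Lean document; each statement's English description precedes it below -/
import Mathlib

section
/- If C = (X, [x,y]) is a maximal clique of a simple undirected link stream with durations L, then there exist nodes u, v ∈ X and a link (b,e,u,v) ∈ E with b = x, i.e., some link between two nodes of X begins exactly at time x. -/
variable {V : Type*} [DecidableEq V]

/-- There is a link between `u` and `v` whose interval contains `[x,y]`. -/
def HasLink (E : Finset (ℝ × ℝ × V × V)) (u v : V) (x y : ℝ) : Prop :=
  ∃ b e, (b, e, u, v) ∈ E ∧ b ≤ x ∧ y ≤ e

/-- A clique `(X,[x,y])` of a link stream with durations. -/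
def IsClique (E : Finset (ℝ × ℝ × V × V)) (X : Finset V) (x y : ℝ) : Prop :=
  2 ≤ X.card ∧ x ≤ y ∧ ∀ u ∈ X, ∀ v ∈ X, u ≠ v → HasLink E u v x y

/-- A maximal clique of a link stream with durations. -/
def IsMaxClique (E : Finset (ℝ × ℝ × V × V)) (X : Finset V) (x y : ℝ) : Prop :=
  IsClique E X x y ∧ ∀ X' x' y', IsClique E X' x' y' → X ⊆ X' → x' ≤ x → y ≤ y' →
    X' = X ∧ x' = x ∧ y' = y

/-- The link stream is simple: no self-loops, well-formed intervals. -/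
def SimpleLS (E : Finset (ℝ × ℝ × V × V)) : Prop :=
  ∀ b e u v, (b, e, u, v) ∈ E → u ≠ v ∧ b ≤ e

/-- The link stream is undirected. -/
def UndirectedLS (E : Finset (ℝ × ℝ × V × V)) : Prop :=
  ∀ b e u v, (b, e, u, v) ∈ E → (b, e, v, u) ∈ E

/-- Any two distinct links between the same pair of nodes have disjoint intervals. -/
def DisjointLinks (E : Finset (ℝ × ℝ × V × V)) : Prop :=
  ∀ b e b' e' u v, (b, e, u, v) ∈ E → (b', e', u, v) ∈ E → (b, e) ≠ (b', e') →
    Disjoint (Set.Icc b e) (Set.Icc b' e')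

/-! Among the links between nodes of `X` whose interval contains `[x, y]`, take one with the
latest beginning `b`. Every pair of `X` is then linked over `[b, y]`, so `(X, [b, y])` is a clique
extending `(X, [x, y])`, and maximality forces `b = x`. -/

section

variable {V : Type*} {E : Finset (ℝ × ℝ × V × V)} {X : Finset V} {x y : ℝ}

theorem IsClique.exists_link_start_isClique (hC : IsClique E X x y) :
    ∃ b e u v, (b, e, u, v) ∈ E ∧ u ∈ X ∧ v ∈ X ∧ b ≤ x ∧ IsClique E X b y := by
  classical
  obtain ⟨hcard, hxy, hlink⟩ := hC
  let covering := E.filter fun q => q.2.2.1 ∈ X ∧ q.2.2.2 ∈ X ∧ q.1 ≤ x ∧ y ≤ q.2.1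
  obtain ⟨u, hu, v, hv, huv⟩ := Finset.one_lt_card.mp hcard
  obtain ⟨b, e, hl, hb, he⟩ := hlink u hu v hv huv
  obtain ⟨⟨b, e, u, v⟩, hq, hlatest⟩ := covering.exists_max_image Prod.fst
    ⟨_, Finset.mem_filter.mpr ⟨hl, hu, hv, hb, he⟩⟩
  obtain ⟨hl, hu, hv, hb, -⟩ := Finset.mem_filter.mp hq
  refine ⟨b, e, u, v, hl, hu, hv, hb, hcard, hb.trans hxy, fun u' hu' v' hv' huv' => ?_⟩
  obtain ⟨b', e', hl', hb', he'⟩ := hlink u' hu' v' hv' huv'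
  exact ⟨b', e', hl', hlatest _ (Finset.mem_filter.mpr ⟨hl', hu', hv', hb', he'⟩), he'⟩

theorem IsMaxClique.eq_of_isClique_of_le {x' : ℝ} (hM : IsMaxClique E X x y)
    (hC : IsClique E X x' y) (hx' : x' ≤ x) : x' = x :=
  (hM.2 X x' y hC subset_rfl hx' le_rfl).2.1

end

theorem maxClique_exists_link_starting_at_x_general {V : Type*}
    (E : Finset (ℝ × ℝ × V × V)) (X : Finset V) (x y : ℝ) (hM : IsMaxClique E X x y) :
    ∃ u ∈ X, ∃ v ∈ X, ∃ e, (x, e, u, v) ∈ E := by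
  obtain ⟨b, e, u, v, hl, hu, hv, hbx, hC⟩ := hM.1.exists_link_start_isClique
  obtain rfl := hM.eq_of_isClique_of_le hC hbx
  exact ⟨u, hu, v, hv, e, hl⟩

/-- a maximal clique has a link between two of its nodes beginning at `x`. -/
theorem maxClique_exists_link_starting_at_x {V : Type*} [DecidableEq V]
    (E : Finset (ℝ × ℝ × V × V)) (hS : SimpleLS E) (hU : UndirectedLS E)
    (hD : DisjointLinks E) (X : Finset V) (x y : ℝ) (hM : IsMaxClique E X x y) :
    ∃ u ∈ X, ∃ v ∈ X, ∃ e, (x, e, u, v) ∈ E :=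
  maxClique_exists_link_starting_at_x_general E X x y hM
end

section
/- Symmetrically, if C = (X, [x,y]) is a maximal clique of a simple undirected link stream with durations L, then there exist nodes u, v ∈ X and a link (b,e,u,v) ∈ E with e = y. -/
variable {V : Type*} [DecidableEq V]

/-- Witness: a link inside `X` covering `[x, y]` whose end `e` is minimal; every pair of `X` then
has a link covering `[x, e]`. -/
theorem IsClique.exists_link_with_clique_to_end {V : Type*} {E : Finset (ℝ × ℝ × V × V)}
    {X : Finset V} {x y : ℝ} (hC : IsClique E X x y) :
    ∃ b e u v, (b, e, u, v) ∈ E ∧ u ∈ X ∧ v ∈ X ∧ y ≤ e ∧ IsClique E X x e := by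
  classical
  obtain ⟨hcard, hxy, hlinks⟩ := hC
  set covering := E.filter fun l => l.2.2.1 ∈ X ∧ l.2.2.2 ∈ X ∧ l.1 ≤ x ∧ y ≤ l.2.1
  have covering_nonempty : covering.Nonempty := by
    obtain ⟨u, hu, v, hv, huv⟩ := Finset.one_lt_card.mp hcard
    obtain ⟨b, e, hE, hbx, hye⟩ := hlinks u hu v hv huv
    exact ⟨(b, e, u, v), Finset.mem_filter.mpr ⟨hE, hu, hv, hbx, hye⟩⟩
  obtain ⟨⟨b, e, u, v⟩, hmem, hfirst⟩ :=
    covering.exists_min_image (fun l => l.2.1) covering_nonempty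
  obtain ⟨hE, hu, hv, -, hye⟩ := Finset.mem_filter.mp hmem
  refine ⟨b, e, u, v, hE, hu, hv, hye, hcard, hxy.trans hye, fun u' hu' v' hv' huv' => ?_⟩
  obtain ⟨b', e', hE', hbx', hye'⟩ := hlinks u' hu' v' hv' huv'
  exact ⟨b', e', hE', hbx', hfirst _ (Finset.mem_filter.mpr ⟨hE', hu', hv', hbx', hye'⟩)⟩

theorem maxClique_exists_link_ending_at_y_general {V : Type*}
    (E : Finset (ℝ × ℝ × V × V)) (X : Finset V) (x y : ℝ) (hM : IsMaxClique E X x y) :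
    ∃ u ∈ X, ∃ v ∈ X, ∃ b, (b, y, u, v) ∈ E := by
  obtain ⟨b, e, u, v, hE, hu, hv, hye, hC⟩ := hM.1.exists_link_with_clique_to_end
  obtain ⟨-, -, rfl⟩ := hM.2 X x e hC subset_rfl le_rfl hye
  exact ⟨u, hu, v, hv, b, hE⟩

/-- a maximal clique has a link between two of its nodes ending at `y`. -/
theorem maxClique_exists_link_ending_at_y {V : Type*} [DecidableEq V]
    (E : Finset (ℝ × ℝ × V × V)) (hS : SimpleLS E) (hU : UndirectedLS E)
    (hD : DisjointLinks E) (X : Finset V) (x y : ℝ) (hM : IsMaxClique E X x y) :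
    ∃ u ∈ X, ∃ v ∈ X, ∃ b, (b, y, u, v) ∈ E :=
  maxClique_exists_link_ending_at_y_general E X x y hM
end

section
/- Let C = (X, [x,y]) be a clique of a finite simple undirected link stream L, and let l = min{ e : ∃ (b,e,u,v) ∈ E with u,v ∈ X distinct and [x,y] ⊆ [b,e] }. Then (X, [x,l]) is a clique of L, and l is the largest time t ≥ y such that (X, [x,t]) is a clique. -/
variable {V : Type*} [DecidableEq V]

def cliqueEndTimes {V : Type*} (E : Finset (ℝ × ℝ × V × V)) (X : Finset V) (x y : ℝ) : Set ℝ :=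
  {e | ∃ b u v, u ∈ X ∧ v ∈ X ∧ u ≠ v ∧ (b, e, u, v) ∈ E ∧ b ≤ x ∧ y ≤ e}

theorem DisjointLinks.eq_of_mem_Icc {V : Type*} {E : Finset (ℝ × ℝ × V × V)}
    (hD : DisjointLinks E) {b e b' e' t : ℝ} {u v : V} (h : (b, e, u, v) ∈ E)
    (h' : (b', e', u, v) ∈ E) (ht : t ∈ Set.Icc b e) (ht' : t ∈ Set.Icc b' e') :
    (b, e) = (b', e') := by
  by_contra hne
  exact Set.disjoint_left.1 (hD b e b' e' u v h h' hne) ht ht'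

theorem IsClique.of_mem_lowerBounds_cliqueEndTimes {V : Type*} {E : Finset (ℝ × ℝ × V × V)}
    {X : Finset V} {x y l : ℝ} (hC : IsClique E X x y)
    (hl : l ∈ lowerBounds (cliqueEndTimes E X x y)) (hyl : y ≤ l) : IsClique E X x l := by
  obtain ⟨hcard, hxy, hlinks⟩ := hC
  refine ⟨hcard, hxy.trans hyl, fun u hu v hv huv => ?_⟩
  obtain ⟨b, e, hmem, hbx, hye⟩ := hlinks u hu v hv huv
  exact ⟨b, e, hmem, hbx, hl ⟨b, u, v, hu, hv, huv, hmem, hbx, hye⟩⟩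

/-- The link ending at `l` contains `x`, and so does the link witnessing `(X,[x,t])` for the same
pair; by disjointness they are the same link, whence `t ≤ l`. -/
theorem IsClique.le_of_mem_cliqueEndTimes {V : Type*} {E : Finset (ℝ × ℝ × V × V)}
    (hD : DisjointLinks E) {X : Finset V} {x y l t : ℝ} (hxy : x ≤ y)
    (hl : l ∈ cliqueEndTimes E X x y) (ht : IsClique E X x t) : t ≤ l := by
  obtain ⟨b, u, v, hu, hv, huv, hmem, hbx, hyl⟩ := hl
  obtain ⟨b', e', hmem', hb'x, hte'⟩ := ht.2.2 u hu v hv huv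
  have hsame := hD.eq_of_mem_Icc hmem hmem' ⟨hbx, hxy.trans hyl⟩ ⟨hb'x, ht.2.1.trans hte'⟩
  exact hte'.trans (Prod.ext_iff.1 hsame).2.ge

theorem extend_time_to_min_end_general {V : Type*}
    (E : Finset (ℝ × ℝ × V × V))
    (hD : DisjointLinks E) (X : Finset V) (x y l : ℝ) (hC : IsClique E X x y)
    (hl : IsLeast {e | ∃ b u v, u ∈ X ∧ v ∈ X ∧ u ≠ v ∧
      (b, e, u, v) ∈ E ∧ b ≤ x ∧ y ≤ e} l) :
    IsClique E X x l ∧ y ≤ l ∧ ∀ t, y ≤ t → IsClique E X x t → t ≤ l := by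
  obtain ⟨hl_mem, hl_lower⟩ := hl
  have hyl : y ≤ l := by
    obtain ⟨_, _, _, _, _, _, _, _, hye⟩ := hl_mem
    exact hye
  exact ⟨hC.of_mem_lowerBounds_cliqueEndTimes hl_lower hyl, hyl,
    fun _ _ ht => ht.le_of_mem_cliqueEndTimes hD hC.2.1 hl_mem⟩

/-- `(X,[x,l])` is a clique, and `l` is the largest such extension time. -/
theorem extend_time_to_min_end {V : Type*} [DecidableEq V]
    (E : Finset (ℝ × ℝ × V × V)) (hS : SimpleLS E) (hU : UndirectedLS E)
    (hD : DisjointLinks E) (X : Finset V) (x y l : ℝ) (hC : IsClique E X x y)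
    (hl : IsLeast {e | ∃ b u v, u ∈ X ∧ v ∈ X ∧ u ≠ v ∧
      (b, e, u, v) ∈ E ∧ b ≤ x ∧ y ≤ e} l) :
    IsClique E X x l ∧ y ≤ l ∧ ∀ t, y ≤ t → IsClique E X x t → t ≤ l :=
  extend_time_to_min_end_general E hD X x y l hC hl
end

section
/- A clique C = (X, [x,y]) of a simple undirected link stream L is maximal if and only if all three of the following hold: (1) there is no node v ∈ V \ X such that (X ∪ {v}, [x,y]) is a clique; (2) there is no time x' < x such that (X, [x',y]) is a clique; (3) there is no time y' > y such that (X, [x,y']) is a clique. -/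
variable {V : Type*} [DecidableEq V]

/-! Cliques stay cliques when the interval shrinks or the node set shrinks (to at least two
nodes). Hence if a clique `(X', [x', y'])` strictly extends `(X, [x, y])`, then already
`(X, [x', y])`, `(X, [x, y'])` or `(insert v X, [x, y])` for some `v ∈ X' \ X` is a clique
strictly extending it. -/

theorem HasLink.mono {α : Type*} {E : Finset (ℝ × ℝ × α × α)} {u v : α} {x y x' y' : ℝ}
    (h : HasLink E u v x y) (hx : x ≤ x') (hy : y' ≤ y) : HasLink E u v x' y' := by
  obtain ⟨b, e, hbe, hb, he⟩ := h
  exact ⟨b, e, hbe, hb.trans hx, hy.trans he⟩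

namespace IsClique

variable {α : Type*} {E : Finset (ℝ × ℝ × α × α)} {X X' : Finset α} {x y : ℝ}

theorem mono_interval {x' y' : ℝ} (h : IsClique E X x y) (hx : x ≤ x') (hxy : x' ≤ y')
    (hy : y' ≤ y) : IsClique E X x' y' :=
  ⟨h.1, hxy, fun u hu v hv huv => (h.2.2 u hu v hv huv).mono hx hy⟩

theorem subset (h : IsClique E X' x y) (hXX' : X ⊆ X') (hX : 2 ≤ X.card) :
    IsClique E X x y :=
  ⟨hX, h.2.1, fun u hu v hv huv => h.2.2 u (hXX' hu) v (hXX' hv) huv⟩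

theorem insert_of_subset [DecidableEq α] {v : α} (h : IsClique E X' x y) (hXX' : X ⊆ X')
    (hX : 2 ≤ X.card) (hv : v ∈ X') : IsClique E (insert v X) x y :=
  h.subset (Finset.insert_subset hv hXX') (hX.trans (Finset.card_le_card (X.subset_insert v)))

end IsClique

theorem maxClique_iff_general {V : Type*} [DecidableEq V]
    (E : Finset (ℝ × ℝ × V × V)) (X : Finset V) (x y : ℝ) (hC : IsClique E X x y) :
    IsMaxClique E X x y ↔
      (∀ v ∉ X, ¬ IsClique E (insert v X) x y) ∧
      (∀ x' < x, ¬ IsClique E X x' y) ∧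
      (∀ y' > y, ¬ IsClique E X x y') := by
  constructor
  · rintro ⟨-, hmax⟩
    refine ⟨fun v hv hcl => ?_, fun x' hx' hcl => ?_, fun y' hy' hcl => ?_⟩
    · exact hv (Finset.insert_eq_self.mp (hmax _ x y hcl (X.subset_insert v) le_rfl le_rfl).1)
    · exact hx'.ne (hmax X x' y hcl subset_rfl hx'.le le_rfl).2.1
    · exact hy'.ne' (hmax X x y' hcl subset_rfl le_rfl hy'.le).2.2
  · rintro ⟨hnode, hleft, hright⟩
    refine ⟨hC, fun X' x' y' hC' hXX' hx' hy' => ?_⟩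
    have hXwide := hC'.subset hXX' hC.1
    have hxx' : x' = x := by
      by_contra hne
      exact hleft x' (hx'.lt_of_ne hne) (hXwide.mono_interval le_rfl (hx'.trans hC.2.1) hy')
    have hyy' : y' = y := by
      by_contra hne
      exact hright y' (hy'.lt_of_ne' hne) (hXwide.mono_interval hx' (hC.2.1.trans hy') le_rfl)
    subst hxx' hyy'
    refine ⟨?_, rfl, rfl⟩
    by_contra hne
    obtain ⟨v, hvX', hvX⟩ := Finset.exists_of_ssubset (hXX'.ssubset_of_ne (Ne.symm hne))
    exact hnode v hvX (hC'.insert_of_subset hXX' hC.1 hvX')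

/-- maximality is equivalent to the three single-direction non-extensibility
conditions. -/
theorem maxClique_iff {V : Type*} [DecidableEq V]
    (E : Finset (ℝ × ℝ × V × V)) (hS : SimpleLS E) (hU : UndirectedLS E)
    (hD : DisjointLinks E) (X : Finset V) (x y : ℝ) (hC : IsClique E X x y) :
    IsMaxClique E X x y ↔
      (∀ v ∉ X, ¬ IsClique E (insert v X) x y) ∧
      (∀ x' < x, ¬ IsClique E X x' y) ∧
      (∀ y' > y, ¬ IsClique E X x y') :=
  maxClique_iff_general E X x y hC
end

section
/- With L an instantaneous link stream and L_Δ its associated link stream with durations as defined, a pair (X, [x,y]) is a Δ-clique of L if and only if (X, [x+Δ, y]) is a clique of L_Δ. -/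
variable {V : Type*} [DecidableEq V]

/-- Time window `T_Δ = [α+Δ, ω]`. -/
def TD (α ω Δ : ℝ) : Set ℝ := Set.Icc (α + Δ) ω

/-- `T_{u,v} = ⋃_{(t,u,v) ∈ E} [t, t+Δ]`. -/
def Tuv (E : Finset (ℝ × V × V)) (Δ : ℝ) (u v : V) : Set ℝ :=
  ⋃ t ∈ {t : ℝ | (t, u, v) ∈ E}, Set.Icc t (t + Δ)

/-- `(b,e,u,v) ∈ E_Δ`: `[b,e]` is a maximal nonempty interval included in `T_Δ ∩ T_{u,v}`. -/
def EDelta (E : Finset (ℝ × V × V)) (α ω Δ : ℝ) (b e : ℝ) (u v : V) : Prop :=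
  b ≤ e ∧ Set.Icc b e ⊆ TD α ω Δ ∩ Tuv E Δ u v ∧
    ∀ b' e', b' ≤ b → e ≤ e' → Set.Icc b' e' ⊆ TD α ω Δ ∩ Tuv E Δ u v → b' = b ∧ e' = e

/-- A `Δ`-clique `(X,[x,y])` of the instantaneous link stream on `T = [α,ω]`. -/
def IsDeltaClique (E : Finset (ℝ × V × V)) (α ω Δ : ℝ) (X : Finset V) (x y : ℝ) : Prop :=
  2 ≤ X.card ∧ α ≤ x ∧ y ≤ ω ∧ x + Δ ≤ y ∧
    ∀ u ∈ X, ∀ v ∈ X, u ≠ v → ∀ s, x ≤ s → s + Δ ≤ y →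
      ∃ t, s ≤ t ∧ t ≤ s + Δ ∧ (t, u, v) ∈ E

/-- A clique `(X,[x,y])` of the derived link stream with durations `L_Δ`. -/
def IsCliqueD (E : Finset (ℝ × V × V)) (α ω Δ : ℝ) (X : Finset V) (x y : ℝ) : Prop :=
  2 ≤ X.card ∧ x ≤ y ∧ ∀ u ∈ X, ∀ v ∈ X, u ≠ v →
    ∃ b e, EDelta E α ω Δ b e u v ∧ b ≤ x ∧ y ≤ e

/-!
For a pair `u, v` of nodes, the condition "every window `[s, s + Δ] ⊆ [x, y]` contains a link
`(t, u, v)`" says exactly that `[x + Δ, y] ⊆ T_{u,v}`, since `s + Δ ∈ [t, t + Δ]` iff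
`t ∈ [s, s + Δ]`. The boundary conditions `α ≤ x`, `y ≤ ω` say that `[x + Δ, y] ⊆ T_Δ`.
Conversely, an interval contained in the compact set `T_Δ ∩ T_{u,v}` extends to a maximal one,
so it lies in a link of `E_Δ`.
-/

open Set

section MaximalInterval

variable {α : Type*} [ConditionallyCompleteLinearOrder α] [TopologicalSpace α] [OrderTopology α]
  [DenselyOrdered α]

/-- The maximal interval is the connected component of `S` containing `[p, q]`. -/
theorem IsCompact.exists_maximal_Icc_superset {S : Set α} (hS : IsCompact S) {p q : α}
    (hpq : p ≤ q) (hsub : Icc p q ⊆ S) :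
    ∃ b e, b ≤ e ∧ Icc b e ⊆ S ∧
      (∀ b' e', b' ≤ b → e ≤ e' → Icc b' e' ⊆ S → b' = b ∧ e' = e) ∧ b ≤ p ∧ q ≤ e := by
  set C := connectedComponentIn S p
  have hpC : p ∈ C := mem_connectedComponentIn (hsub ⟨le_rfl, hpq⟩)
  have hCS : C ⊆ S := connectedComponentIn_subset S p
  have hIcc_subset {b' e' : α} (hp : p ∈ Icc b' e') (hS' : Icc b' e' ⊆ S) : Icc b' e' ⊆ C :=
    isPreconnected_Icc.subset_connectedComponentIn hp hS'
  have hCclosed : IsClosed C := by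
    refine closure_subset_iff_isClosed.mp ?_
    exact isPreconnected_connectedComponentIn.closure.subset_connectedComponentIn
      (subset_closure hpC) (closure_minimal hCS hS.isClosed)
  have hC : IsCompact C := hS.of_isClosed_subset hCclosed hCS
  have hbC : sInf C ∈ C := hC.sInf_mem ⟨p, hpC⟩
  have heC : sSup C ∈ C := hC.sSup_mem ⟨p, hpC⟩
  have hbp : sInf C ≤ p := csInf_le hC.bddBelow hpC
  have hqe : q ≤ sSup C := le_csSup hC.bddAbove (hIcc_subset ⟨le_rfl, hpq⟩ hsub ⟨hpq, le_rfl⟩)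
  have hCIcc : Icc (sInf C) (sSup C) ⊆ C :=
    isPreconnected_connectedComponentIn.ordConnected.out hbC heC
  refine ⟨sInf C, sSup C, hbp.trans (hpq.trans hqe), hCIcc.trans hCS, ?_, hbp, hqe⟩
  intro b' e' hb' he' hS'
  have hC' : Icc b' e' ⊆ C := hIcc_subset ⟨hb'.trans hbp, hpq.trans (hqe.trans he')⟩ hS'
  have hb'e' : b' ≤ e' := hb'.trans ((hbp.trans hpq).trans (hqe.trans he'))
  exact ⟨le_antisymm hb' (csInf_le hC.bddBelow (hC' ⟨le_rfl, hb'e'⟩)),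
    le_antisymm (le_csSup hC.bddAbove (hC' ⟨hb'e', le_rfl⟩)) he'⟩

end MaximalInterval

section LinkStream

variable {V : Type*} (E : Finset (ℝ × V × V)) (α ω Δ : ℝ) (u v : V)

theorem mem_Tuv {z : ℝ} : z ∈ Tuv E Δ u v ↔ ∃ t, (t, u, v) ∈ E ∧ z ∈ Icc t (t + Δ) := by
  simp only [Tuv, mem_iUnion₂, mem_ofPred_eq, exists_prop]

theorem isClosed_Tuv : IsClosed (Tuv E Δ u v) := by
  have hfin : {t : ℝ | (t, u, v) ∈ E}.Finite :=
    (E.finite_toSet.image Prod.fst).subset fun t ht => ⟨(t, u, v), ht, rfl⟩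
  exact hfin.isClosed_biUnion fun t _ => isClosed_Icc

theorem forall_window_iff_Icc_subset_Tuv (x y : ℝ) :
    (∀ s, x ≤ s → s + Δ ≤ y → ∃ t, s ≤ t ∧ t ≤ s + Δ ∧ (t, u, v) ∈ E) ↔
      Icc (x + Δ) y ⊆ Tuv E Δ u v := by
  constructor
  · intro h z hz
    obtain ⟨t, hst, hts, htE⟩ := h (z - Δ) (by linarith [hz.1]) (by linarith [hz.2])
    exact (mem_Tuv E Δ u v).2 ⟨t, htE, by linarith, by linarith⟩
  · intro h s hxs hsy
    obtain ⟨t, htE, htz, hzt⟩ := (mem_Tuv E Δ u v).1 (h ⟨by linarith, hsy⟩)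
    exact ⟨t, by linarith, htz, htE⟩

theorem exists_EDelta_iff {x y : ℝ} (hxy : x ≤ y) :
    (∃ b e, EDelta E α ω Δ b e u v ∧ b ≤ x ∧ y ≤ e) ↔ Icc x y ⊆ TD α ω Δ ∩ Tuv E Δ u v := by
  constructor
  · rintro ⟨b, e, ⟨-, hbe, -⟩, hbx, hye⟩
    exact (Icc_subset_Icc hbx hye).trans hbe
  · intro h
    have hK : IsCompact (TD α ω Δ ∩ Tuv E Δ u v) :=
      isCompact_Icc.inter_right (isClosed_Tuv E Δ u v)
    obtain ⟨b, e, hbe, hsub, hmax, hbx, hye⟩ := hK.exists_maximal_Icc_superset hxy h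
    exact ⟨b, e, ⟨hbe, hsub, hmax⟩, hbx, hye⟩

theorem Icc_add_subset_TD_iff {x y : ℝ} (hxy : x + Δ ≤ y) :
    Icc (x + Δ) y ⊆ TD α ω Δ ↔ α ≤ x ∧ y ≤ ω := by
  rw [TD, Icc_subset_Icc_iff hxy, add_le_add_iff_right]

end LinkStream

theorem deltaClique_iff_clique_general {V : Type*}
    (E : Finset (ℝ × V × V)) (α ω Δ : ℝ)
    (X : Finset V) (x y : ℝ) :
    IsDeltaClique E α ω Δ X x y ↔ IsCliqueD E α ω Δ X (x + Δ) y := by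
  simp only [IsDeltaClique, IsCliqueD, forall_window_iff_Icc_subset_Tuv]
  constructor
  · rintro ⟨hcard, hαx, hyω, hxy, hlink⟩
    refine ⟨hcard, hxy, fun u hu v hv huv => (exists_EDelta_iff E α ω Δ u v hxy).2 ?_⟩
    exact subset_inter ((Icc_add_subset_TD_iff α ω Δ hxy).2 ⟨hαx, hyω⟩) (hlink u hu v hv huv)
  · rintro ⟨hcard, hxy, hlink⟩
    have hsub u (hu : u ∈ X) v (hv : v ∈ X) (huv : u ≠ v) :=
      (exists_EDelta_iff E α ω Δ u v hxy).1 (hlink u hu v hv huv)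
    obtain ⟨u, hu, v, hv, huv⟩ := Finset.one_lt_card.mp hcard
    obtain ⟨hαx, hyω⟩ :=
      (Icc_add_subset_TD_iff α ω Δ hxy).1 ((hsub u hu v hv huv).trans inter_subset_left)
    exact ⟨hcard, hαx, hyω, hxy, fun u hu v hv huv => (hsub u hu v hv huv).trans inter_subset_right⟩

/-- `(X,[x,y])` is a `Δ`-clique of `L` iff `(X,[x+Δ,y])` is a clique of `L_Δ`. -/
theorem deltaClique_iff_clique {V : Type*} [DecidableEq V]
    (E : Finset (ℝ × V × V)) (α ω Δ : ℝ) (hΔ0 : 0 ≤ Δ) (hΔ : Δ ≤ ω - α)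
    (hE : ∀ t u v, (t, u, v) ∈ E → (α ≤ t ∧ t ≤ ω) ∧ u ≠ v)
    (hU : ∀ t u v, (t, u, v) ∈ E → (t, v, u) ∈ E)
    (X : Finset V) (x y : ℝ) :
    IsDeltaClique E α ω Δ X x y ↔ IsCliqueD E α ω Δ X (x + Δ) y :=
  deltaClique_iff_clique_general E α ω Δ X x y
end

section
/- Let L be a finite simple undirected link stream with durations and let (X, [x,y]) be a clique. If for every pair of distinct u,v ∈ X the unique link (b_{uv}, e_{uv}, u, v) ∈ E with [x,y] ⊆ [b_{uv}, e_{uv}] satisfies b' := max b_{uv} and e' := min e_{uv}, then (X, [b', e']) is a clique of L containing (X, [x,y]), and it is maximal in time: there is no interval [x'',y''] strictly containing [b',e'] such that (X, [x'',y'']) is a clique. -/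
/-!
Both endpoints are attained, by links `(b', e₁, u, v)` and `(b₂, e', w, z)` covering `[x, y]`.
Any interval `[x'', y'']` of a clique on `X` that contains `[b', e']` contains `x`, so the link of
`u, v` covering `[x'', y'']` meets `(b', e₁, u, v)` at `x`; by disjointness of links it is that
link, hence `b' ≤ x''`. Symmetrically `y'' ≤ e'`.
-/

variable {V : Type*} [DecidableEq V]

section

variable {V : Type*} {E : Finset (ℝ × ℝ × V × V)} {X : Finset V} {u v : V} {b e t x y x' y' : ℝ}

/-- The starts `b_uv` of the links covering `[x, y]` between distinct nodes of `X`. -/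
def linkStartsCovering (E : Finset (ℝ × ℝ × V × V)) (X : Finset V) (x y : ℝ) : Set ℝ :=
  {b | ∃ e u v, u ∈ X ∧ v ∈ X ∧ u ≠ v ∧ (b, e, u, v) ∈ E ∧ b ≤ x ∧ y ≤ e}

/-- The ends `e_uv` of the links covering `[x, y]` between distinct nodes of `X`. -/
def linkEndsCovering (E : Finset (ℝ × ℝ × V × V)) (X : Finset V) (x y : ℝ) : Set ℝ :=
  {e | ∃ b u v, u ∈ X ∧ v ∈ X ∧ u ≠ v ∧ (b, e, u, v) ∈ E ∧ b ≤ x ∧ y ≤ e}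

theorem DisjointLinks.eq_of_mem_Icc_s15 (hD : DisjointLinks E) {b₂ e₂ : ℝ}
    (h₁ : (b, e, u, v) ∈ E) (h₂ : (b₂, e₂, u, v) ∈ E)
    (ht₁ : t ∈ Set.Icc b e) (ht₂ : t ∈ Set.Icc b₂ e₂) : (b, e) = (b₂, e₂) := by
  by_contra hne
  exact Set.disjoint_left.mp (hD b e b₂ e₂ u v h₁ h₂ hne) ht₁ ht₂

/-- A link covering an interval through `t` is the link through `t`. -/
theorem DisjointLinks.bounds_of_hasLink (hD : DisjointLinks E) (hmem : (b, e, u, v) ∈ E)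
    (ht : t ∈ Set.Icc b e) (hL : HasLink E u v x y) (hxt : x ≤ t) (hty : t ≤ y) :
    b ≤ x ∧ y ≤ e := by
  obtain ⟨b₂, e₂, hmem₂, hbx, hye⟩ := hL
  obtain ⟨rfl, rfl⟩ := Prod.mk.inj <|
    hD.eq_of_mem_Icc_s15 hmem₂ hmem ⟨hbx.trans hxt, hty.trans hye⟩ ht
  exact ⟨hbx, hye⟩

theorem DisjointLinks.le_of_mem_linkStartsCovering (hD : DisjointLinks E) (hxy : x ≤ y)
    (hb : b ∈ linkStartsCovering E X x y) (hC : IsClique E X x' y') (hx' : x' ≤ x)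
    (hy' : x ≤ y') : b ≤ x' := by
  obtain ⟨e, u, v, hu, hv, huv, hmem, hbx, hye⟩ := hb
  exact (hD.bounds_of_hasLink hmem ⟨hbx, hxy.trans hye⟩ (hC.2.2 u hu v hv huv) hx' hy').1

theorem DisjointLinks.le_of_mem_linkEndsCovering (hD : DisjointLinks E) (hxy : x ≤ y)
    (he : e ∈ linkEndsCovering E X x y) (hC : IsClique E X x' y') (hx' : x' ≤ y)
    (hy' : y ≤ y') : y' ≤ e := by
  obtain ⟨b, u, v, hu, hv, huv, hmem, hbx, hye⟩ := he
  exact (hD.bounds_of_hasLink hmem ⟨hbx.trans hxy, hye⟩ (hC.2.2 u hu v hv huv) hx' hy').2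

theorem IsClique.of_isGreatest_of_isLeast (hC : IsClique E X x y)
    (hb : IsGreatest (linkStartsCovering E X x y) x')
    (he : IsLeast (linkEndsCovering E X x y) y') : IsClique E X x' y' := by
  obtain ⟨_, _, _, _, _, _, _, hx'x, _⟩ := hb.1
  obtain ⟨_, _, _, _, _, _, _, _, hyy'⟩ := he.1
  refine ⟨hC.1, hx'x.trans (hC.2.1.trans hyy'), fun u hu v hv huv => ?_⟩
  obtain ⟨b, e, hmem, hbx, hye⟩ := hC.2.2 u hu v hv huv
  exact ⟨b, e, hmem, hb.2 ⟨e, u, v, hu, hv, huv, hmem, hbx, hye⟩,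
    he.2 ⟨b, u, v, hu, hv, huv, hmem, hbx, hye⟩⟩

end

theorem clique_extend_to_tight_interval_general {V : Type*}
    (E : Finset (ℝ × ℝ × V × V))
    (hD : DisjointLinks E) (X : Finset V) (x y b' e' : ℝ) (hC : IsClique E X x y)
    (hb : IsGreatest {b | ∃ e u v, u ∈ X ∧ v ∈ X ∧ u ≠ v ∧
      (b, e, u, v) ∈ E ∧ b ≤ x ∧ y ≤ e} b')
    (he : IsLeast {e | ∃ b u v, u ∈ X ∧ v ∈ X ∧ u ≠ v ∧
      (b, e, u, v) ∈ E ∧ b ≤ x ∧ y ≤ e} e') :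
    IsClique E X b' e' ∧ b' ≤ x ∧ y ≤ e' ∧
    ∀ x'' y'', x'' ≤ b' → e' ≤ y'' → (x'', y'') ≠ (b', e') → ¬ IsClique E X x'' y'' := by
  have hxy : x ≤ y := hC.2.1
  obtain ⟨_, _, _, _, _, _, _, hb'x, _⟩ := hb.1
  obtain ⟨_, _, _, _, _, _, _, _, hye'⟩ := he.1
  refine ⟨hC.of_isGreatest_of_isLeast hb he, hb'x, hye', fun x'' y'' hx'' hy'' hne hC'' => ?_⟩
  have hb'x'' : b' ≤ x'' :=
    hD.le_of_mem_linkStartsCovering hxy hb.1 hC'' (hx''.trans hb'x) (hxy.trans (hye'.trans hy''))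
  have hy''e' : y'' ≤ e' :=
    hD.le_of_mem_linkEndsCovering hxy he.1 hC'' ((hx''.trans hb'x).trans hxy) (hye'.trans hy'')
  exact hne (Prod.ext (le_antisymm hx'' hb'x'') (le_antisymm hy''e' hy''))

/-- extending a clique's interval to `[max b_uv, min e_uv]` yields a clique
that cannot be further extended in time. -/
theorem clique_extend_to_tight_interval {V : Type*} [DecidableEq V]
    (E : Finset (ℝ × ℝ × V × V)) (hS : SimpleLS E) (hU : UndirectedLS E)
    (hD : DisjointLinks E) (X : Finset V) (x y b' e' : ℝ) (hC : IsClique E X x y)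
    (hb : IsGreatest {b | ∃ e u v, u ∈ X ∧ v ∈ X ∧ u ≠ v ∧
      (b, e, u, v) ∈ E ∧ b ≤ x ∧ y ≤ e} b')
    (he : IsLeast {e | ∃ b u v, u ∈ X ∧ v ∈ X ∧ u ≠ v ∧
      (b, e, u, v) ∈ E ∧ b ≤ x ∧ y ≤ e} e') :
    IsClique E X b' e' ∧ b' ≤ x ∧ y ≤ e' ∧
    ∀ x'' y'', x'' ≤ b' → e' ≤ y'' → (x'', y'') ≠ (b', e') → ¬ IsClique E X x'' y'' :=
  clique_extend_to_tight_interval_general E hD X x y b' e' hC hb he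
end

section
/- Every maximal clique (X, [x,y]) of a finite simple undirected link stream L with |X| = k ≥ 2 can be reached by a sequence of cliques C_1, ..., C_{k-1}, C, where C_1 = ({u,v}, [x,x]) for some link (x,e,u,v) ∈ E with u,v ∈ X, each C_{i+1} is obtained from C_i = (X_i, [x,x]) by adding a single node of X (so X_i ⊆ X_{i+1} ⊆ X, |X_{i+1}| = |X_i| + 1), each C_i is a clique, and C is obtained from C_{k-1} = (X, [x,x]) by extending the time interval to [x,y]. -/
/-!
By maximality, `x` is the latest start among the links that cover `[x,y]` between distinct nodes
of `X`: were all of them to start before `x`, the clique could be extended to the left. So some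
link between nodes `u ≠ v` of `X` starts exactly at `x`. Every subset of `X` with at least two
nodes is a clique on `[x,x]`, so adding the nodes of `X \ {u,v}` one at a time to `{u,v}` gives
the chain.
-/

variable {V : Type*} [DecidableEq V]

theorem Finset.exists_monotone_chain {α : Type*} [DecidableEq α] {A X : Finset α}
    (hAX : A ⊆ X) :
    ∃ g : ℕ → Finset α, g 0 = A ∧ g (X.card - A.card) = X ∧ Monotone g ∧ (∀ i, g i ⊆ X) ∧
      ∀ i ≤ X.card - A.card, (g i).card = A.card + i := by
  set L := (X \ A).toList
  have hL : ∀ i, ∀ w ∈ (L.take i).toFinset, w ∈ X \ A := fun i w hw ↦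
    Finset.mem_toList.mp (List.take_subset i L (List.mem_toFinset.mp hw))
  have hlen : L.length = X.card - A.card := by
    rw [Finset.length_toList, Finset.card_sdiff_of_subset hAX]
  refine ⟨fun i ↦ A ∪ (L.take i).toFinset, by simp, ?_, ?_, ?_, ?_⟩
  · show A ∪ (L.take (X.card - A.card)).toFinset = X
    rw [← hlen, List.take_length, Finset.toList_toFinset, Finset.union_sdiff_of_subset hAX]
  · intro i j hij
    exact Finset.union_subset_union le_rfl fun w hw ↦
      List.mem_toFinset.mpr (List.take_subset_take_left L hij (List.mem_toFinset.mp hw))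
  · exact fun i ↦ Finset.union_subset hAX fun w hw ↦ (Finset.mem_sdiff.mp (hL i w hw)).1
  · intro i hi
    have hdisj : Disjoint A (L.take i).toFinset :=
      Finset.disjoint_right.mpr fun w hw ↦ (Finset.mem_sdiff.mp (hL i w hw)).2
    rw [Finset.card_union_of_disjoint hdisj,
      List.toFinset_card_of_nodup ((Finset.nodup_toList _).sublist (List.take_sublist i L)),
      List.length_take, hlen, min_eq_left hi]

omit [DecidableEq V] in
theorem IsClique.mono {E : Finset (ℝ × ℝ × V × V)} {X S : Finset V} {x y x' y' : ℝ}
    (hC : IsClique E X x y) (hSX : S ⊆ X) (hS : 2 ≤ S.card) (hx : x ≤ x') (hxy' : x' ≤ y')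
    (hy : y' ≤ y) : IsClique E S x' y' := by
  refine ⟨hS, hxy', fun p hp q hq hpq ↦ ?_⟩
  obtain ⟨b, e, hmem, hb, he⟩ := hC.2.2 p (hSX hp) q (hSX hq) hpq
  exact ⟨b, e, hmem, hb.trans hx, hy.trans he⟩

theorem IsMaxClique.exists_link_starting_at {E : Finset (ℝ × ℝ × V × V)} {X : Finset V}
    {x y : ℝ} (hM : IsMaxClique E X x y) :
    ∃ u ∈ X, ∃ v ∈ X, u ≠ v ∧ ∃ e, (x, e, u, v) ∈ E := by
  obtain ⟨⟨hcard, hxy, hlink⟩, hmax⟩ := hM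
  set B := E.filter fun l ↦ l.2.2.1 ∈ X ∧ l.2.2.2 ∈ X ∧ l.2.2.1 ≠ l.2.2.2 ∧ l.1 ≤ x ∧ y ≤ l.2.1
  have hB : ∀ u ∈ X, ∀ v ∈ X, u ≠ v → ∃ b e, (b, e, u, v) ∈ B := by
    intro u hu v hv huv
    obtain ⟨b, e, hmem, hb, he⟩ := hlink u hu v hv huv
    exact ⟨b, e, Finset.mem_filter.mpr ⟨hmem, hu, hv, huv, hb, he⟩⟩
  obtain ⟨a, ha, c, hc, hac⟩ := Finset.one_lt_card.mp hcard
  obtain ⟨b₀, e₀, h₀⟩ := hB a ha c hc hac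
  set x' := B.sup' ⟨_, h₀⟩ Prod.fst
  have hx' : x' ≤ x := Finset.sup'_le _ _ fun l hl ↦ (Finset.mem_filter.mp hl).2.2.2.2.1
  have hclique : IsClique E X x' y := by
    refine ⟨hcard, hx'.trans hxy, fun u hu v hv huv ↦ ?_⟩
    obtain ⟨b, e, hmem⟩ := hB u hu v hv huv
    exact ⟨b, e, (Finset.mem_filter.mp hmem).1, Finset.le_sup' Prod.fst hmem,
      (Finset.mem_filter.mp hmem).2.2.2.2.2⟩
  have hx'x : x' = x := (hmax X x' y hclique le_rfl hx' le_rfl).2.1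
  obtain ⟨⟨b, e, u, v⟩, hl, hsup⟩ := Finset.exists_mem_eq_sup' ⟨_, h₀⟩ Prod.fst
  obtain ⟨hmem, hu, hv, huv, -⟩ := Finset.mem_filter.mp hl
  have hb : b = x := hsup.symm.trans hx'x
  exact ⟨u, hu, v, hv, huv, e, hb ▸ hmem⟩

theorem maxClique_reachable_by_chain_general {V : Type*} [DecidableEq V]
    (E : Finset (ℝ × ℝ × V × V)) (X : Finset V) (x y : ℝ) (k : ℕ)
    (hM : IsMaxClique E X x y) (hk : X.card = k) :
    ∃ u v e, u ∈ X ∧ v ∈ X ∧ (x, e, u, v) ∈ E ∧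
      ∃ f : ℕ → Finset V, f 1 = {u, v} ∧ f (k - 1) = X ∧
        (∀ i, 1 ≤ i → i ≤ k - 1 → f i ⊆ X ∧ (f i).card = i + 1 ∧ IsClique E (f i) x x) ∧
        (∀ i, 1 ≤ i → i < k - 1 → f i ⊆ f (i + 1)) ∧
        IsClique E X x y := by
  obtain ⟨u, hu, v, hv, huv, e, hlink⟩ := hM.exists_link_starting_at
  have hpair : ({u, v} : Finset V) ⊆ X :=
    Finset.insert_subset hu (Finset.singleton_subset_iff.mpr hv)
  obtain ⟨g, hg₀, hgX, hmono, hsub, hcard⟩ := Finset.exists_monotone_chain hpair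
  rw [Finset.card_pair huv, hk] at hgX hcard
  have hcard' : ∀ i, 1 ≤ i → i ≤ k - 1 → (g (i - 1)).card = i + 1 := fun i hi hik ↦ by
    rw [hcard (i - 1) (by omega)]; omega
  refine ⟨u, v, e, hu, hv, hlink, fun i ↦ g (i - 1), hg₀, ?_, ?_, ?_, hM.1⟩
  · show g (k - 1 - 1) = X
    rwa [Nat.sub_sub]
  · intro i hi hik
    exact ⟨hsub _, hcard' i hi hik,
      hM.1.mono (hsub _) (by rw [hcard' i hi hik]; omega) le_rfl le_rfl hM.1.2.1⟩
  · exact fun i _ _ ↦ hmono (by omega)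

/-- every maximal clique `(X,[x,y])` with `|X| = k` is reached by a chain of
cliques on `[x,x]`, starting from a pair linked by a link beginning at `x`, adding one node
of `X` at a time up to `(X,[x,x])`, then extending the interval to `[x,y]`. -/
theorem maxClique_reachable_by_chain {V : Type*} [DecidableEq V]
    (E : Finset (ℝ × ℝ × V × V)) (hS : SimpleLS E) (hU : UndirectedLS E)
    (hD : DisjointLinks E) (X : Finset V) (x y : ℝ) (k : ℕ)
    (hM : IsMaxClique E X x y) (hk : X.card = k) (h2 : 2 ≤ k) :
    ∃ u v e, u ∈ X ∧ v ∈ X ∧ (x, e, u, v) ∈ E ∧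
      ∃ f : ℕ → Finset V, f 1 = {u, v} ∧ f (k - 1) = X ∧
        (∀ i, 1 ≤ i → i ≤ k - 1 → f i ⊆ X ∧ (f i).card = i + 1 ∧ IsClique E (f i) x x) ∧
        (∀ i, 1 ≤ i → i < k - 1 → f i ⊆ f (i + 1)) ∧
        IsClique E X x y :=
  maxClique_reachable_by_chain_general E X x y k hM hk
end
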